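/- Let $N = 1$, $s \in (0,1)$, $m \in \mathbb{N} \setminus \{0\}$, and define the polynomial $U(y,t) = \sum_{k=0}^{m-1} a_k\, y^{2k+1} t^{2m-2k-2}$ on $\mathbb{R}^2$, where $a_0 = 1$ and the coefficients satisfy the recursion $a_k = \frac{-2[(m-k)^2 - s(m-k)]}{k(2k+1)} a_{k-1}$ for $k \in \{1, \dots, m-1\}$. Then $U$ satisfies $\Delta U + \frac{1-2s}{t} \partial_t U = 0$ for all $(y,t)$ with $t \neq 0$, i.e. $t\,(\partial_{yy} U + \partial_{tt} U) + (1-2s)\, \partial_t U = 0$ on $\mathbb{R}^2$. -/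

import Mathlib

open Finset

/-- The polynomial `U(y,t) = ∑_{k=0}^{m-1} a_k y^{2k+1} t^{2m-2k-2}`. -/
noncomputable def Upoly (m : ℕ) (a : ℕ → ℝ) (y t : ℝ) : ℝ :=
  ∑ k ∈ Finset.range m, a k * y ^ (2 * k + 1) * t ^ (2 * m - 2 * k - 2)

/-!
Applying `t ∂_yy` to the `k`-th monomial and `t ∂_tt + (1 - 2s) ∂_t` to the `(k-1)`-st one
produces the same monomial `y^{2k-1} t^{2m-2k-1}`, with coefficients
`(2k+1)(2k) a_k` and `n(n - 2s) a_{k-1}` where `n = 2(m-k)`; the recursion for `a_k` says exactly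
that they cancel. What is left over vanishes: the `y`-part of the first monomial carries the
factor `2·0`, the `t`-part of the last one the factor `n = 0`.
-/

theorem deriv_sum_mul_pow {ι 𝕜 : Type*} [NontriviallyNormedField 𝕜] (s : Finset ι)
    (c : ι → 𝕜) (p : ι → ℕ) :
    deriv (fun x => ∑ i ∈ s, c i * x ^ p i) =
      fun x => ∑ i ∈ s, c i * p i * x ^ (p i - 1) := by
  funext x
  rw [deriv_fun_sum fun i _ => (differentiableAt_pow (p i)).const_mul (c i)]
  simp only [deriv_const_mul_field', deriv_pow_field, mul_assoc]

theorem mul_mul_natCast_pred_mul_pow {R : Type*} [CommRing R] (n : ℕ) (x : R) :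
    x * (n * ((n - 1 : ℕ) : R) * x ^ (n - 1 - 1)) = n * (n - 1) * x ^ (n - 1) := by
  rcases n with _ | _ | n
  · simp
  · simp
  · simp only [Nat.add_sub_cancel, Nat.cast_add, Nat.cast_one]
    ring

theorem Finset.sum_range_add_eq_zero_of_shift {M : Type*} [AddCommMonoid M] {A B : ℕ → M}
    {m : ℕ} (hA : A 0 = 0) (hB : ∀ k, k + 1 = m → B k = 0)
    (hAB : ∀ k, k + 1 < m → A (k + 1) + B k = 0) :
    ∑ k ∈ range m, (A k + B k) = 0 := by
  rcases m with _ | n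
  · simp
  rw [sum_add_distrib, sum_range_succ', sum_range_succ, hA, hB n rfl, add_zero, add_zero,
    ← sum_add_distrib, sum_eq_zero fun k hk => hAB k (by simpa using hk)]

section Upoly

variable {m : ℕ} {a : ℕ → ℝ} {s : ℝ}

theorem deriv_deriv_Upoly_fst (y t : ℝ) :
    deriv (deriv fun y' => Upoly m a y' t) y = ∑ k ∈ range m,
      a k * t ^ (2 * m - 2 * k - 2) * ((2 * k + 1) * (2 * k)) * y ^ (2 * k - 1) := by
  have h : (fun y' => Upoly m a y' t)
      = fun y' => ∑ k ∈ range m, a k * t ^ (2 * m - 2 * k - 2) * y' ^ (2 * k + 1) :=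
    funext fun _ => sum_congr rfl fun _ _ => mul_right_comm _ _ _
  rw [h, deriv_sum_mul_pow, deriv_sum_mul_pow]
  refine sum_congr rfl fun k _ => ?_
  rw [show 2 * k + 1 - 1 - 1 = 2 * k - 1 by omega]
  push_cast
  ring

theorem deriv_Upoly_snd (y t : ℝ) :
    deriv (fun t' => Upoly m a y t') t = ∑ k ∈ range m,
      a k * y ^ (2 * k + 1) * (2 * m - 2 * k - 2 : ℕ) * t ^ (2 * m - 2 * k - 2 - 1) := by
  simp only [Upoly, deriv_sum_mul_pow]

theorem deriv_deriv_Upoly_snd (y t : ℝ) :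
    deriv (deriv fun t' => Upoly m a y t') t = ∑ k ∈ range m,
      a k * y ^ (2 * k + 1) * ((2 * m - 2 * k - 2 : ℕ) * (2 * m - 2 * k - 2 - 1 : ℕ)) *
        t ^ (2 * m - 2 * k - 2 - 1 - 1) := by
  simp only [Upoly, deriv_sum_mul_pow]
  exact sum_congr rfl fun _ _ => by ring

theorem Upoly_operator_eq_sum (y t : ℝ) :
    t * (deriv (deriv fun y' => Upoly m a y' t) y + deriv (deriv fun t' => Upoly m a y t') t)
      + (1 - 2 * s) * deriv (fun t' => Upoly m a y t') t
      = ∑ k ∈ range m,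
        (a k * ((2 * k + 1) * (2 * k)) * y ^ (2 * k - 1) * t ^ (2 * m - 2 * k - 1)
          + a k * ((2 * m - 2 * k - 2 : ℕ) * ((2 * m - 2 * k - 2 : ℕ) - 2 * s))
            * y ^ (2 * k + 1) * t ^ (2 * m - 2 * k - 2 - 1)) := by
  rw [deriv_deriv_Upoly_fst, deriv_deriv_Upoly_snd, deriv_Upoly_snd, ← sum_add_distrib, mul_sum,
    mul_sum, ← sum_add_distrib]
  refine sum_congr rfl fun k hk => ?_
  have hexp : 2 * m - 2 * k - 1 = 2 * m - 2 * k - 2 + 1 := by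
    have := mem_range.mp hk
    omega
  rw [hexp, pow_succ]
  linear_combination a k * y ^ (2 * k + 1) * mul_mul_natCast_pred_mul_pow (2 * m - 2 * k - 2) t

theorem Upoly_coeff_relation (harec : ∀ k : ℕ, 1 ≤ k → k ≤ m - 1 →
        a k = -2 * (((m : ℝ) - k) ^ 2 - s * ((m : ℝ) - k)) / ((k : ℝ) * (2 * k + 1))
          * a (k - 1))
    {k : ℕ} (hk : k + 1 < m) :
    a (k + 1) * ((2 * (k + 1 : ℕ) + 1) * (2 * (k + 1 : ℕ)))
      + a k * ((2 * m - 2 * k - 2 : ℕ) * ((2 * m - 2 * k - 2 : ℕ) - 2 * s)) = 0 := by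
  have hrec := harec (k + 1) (by omega) (by omega)
  have hcast : ((2 * m - 2 * k - 2 : ℕ) : ℝ) = 2 * ((m : ℝ) - (k + 1 : ℕ)) := by
    rw [Nat.cast_sub (by omega), Nat.cast_sub (by omega)]
    push_cast
    ring
  rw [hcast, hrec, Nat.add_sub_cancel]
  field_simp
  ring

end Upoly

theorem stmt4_general (s : ℝ) (m : ℕ)
    (a : ℕ → ℝ)
    (harec : ∀ k : ℕ, 1 ≤ k → k ≤ m - 1 →
      a k = -2 * (((m : ℝ) - k) ^ 2 - s * ((m : ℝ) - k)) / ((k : ℝ) * (2 * k + 1)) * a (k - 1)) :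
    ∀ y t : ℝ,
      t * (deriv (deriv (fun y' => Upoly m a y' t)) y
            + deriv (deriv (fun t' => Upoly m a y t')) t)
        + (1 - 2 * s) * deriv (fun t' => Upoly m a y t') t = 0 := by
  intro y t
  rw [Upoly_operator_eq_sum]
  refine sum_range_add_eq_zero_of_shift (by simp) (fun k hk => ?_) (fun k hk => ?_)
  · simp [show 2 * m - 2 * k - 2 = 0 by omega]
  · rw [show 2 * (k + 1) - 1 = 2 * k + 1 by omega,
      show 2 * m - 2 * (k + 1) - 1 = 2 * m - 2 * k - 2 - 1 by omega]
    linear_combination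
      y ^ (2 * k + 1) * t ^ (2 * m - 2 * k - 2 - 1) * Upoly_coeff_relation harec hk

/-- For `N = 1`, the odd homogeneous polynomial `U(y,t) = ∑_{k=0}^{m-1} a_k y^{2k+1} t^{2m-2k-2}`
with `a_0 = 1` and `a_k = -2[(m-k)² - s(m-k)]/(k(2k+1)) a_{k-1}` satisfies
`t (U_{yy} + U_{tt}) + (1-2s) U_t = 0` on all of `ℝ²`. -/
theorem stmt4 (s : ℝ) (hs : s ∈ Set.Ioo (0 : ℝ) 1) (m : ℕ) (hm : 1 ≤ m)
    (a : ℕ → ℝ) (ha0 : a 0 = 1)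
    (harec : ∀ k : ℕ, 1 ≤ k → k ≤ m - 1 →
      a k = -2 * (((m : ℝ) - k) ^ 2 - s * ((m : ℝ) - k)) / ((k : ℝ) * (2 * k + 1)) * a (k - 1)) :
    ∀ y t : ℝ,
      t * (deriv (deriv (fun y' => Upoly m a y' t)) y
            + deriv (deriv (fun t' => Upoly m a y t')) t)
        + (1 - 2 * s) * deriv (fun t' => Upoly m a y t') t = 0 :=
  stmt4_general s m a harec
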